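/- arXiv:1506.01218 — 2 statements merged into one kernel-verified Lean document; each statement's English description precedes it below -/
import Mathlib

section
/- Let G be a group, X a G-space, A a C*-algebra, V an A-module, U : G → GL_A(V) a representation, and α : G × X → Inv(Ã) ∩ Z(Ã) a map with α(e,x) = 1 and α(gh, x) = σ(g,h)·α(h,x)·α(g, hx) for a 2-cocycle σ. Let M be a Hilbert A-module, R : X → Lin_A(V; M) a map, and Ũ : G → U_A(M) a σ-multiplier representation such that R(x)U(g) = α(g, g⁻¹x)·Ũ(g)R(g⁻¹x) for all x ∈ X and g ∈ G. Then K defined by K_{x,y}(v,w) := ⟨R(x)v, R(y)w⟩ is a positive (X, α, U)-covariant kernel: (a) for all n, x_1,…,x_n ∈ X and v_1,…,v_n ∈ V, the sum Σ_{j,k} K_{x_j, x_k}(v_j, v_k) ≥ 0 in A; (b) K_{gx, gy}(v,w) = α(g,x)* · K_{x,y}(U(g⁻¹)v, U(g⁻¹)w) · α(g,y) for all g, x, y, v, w. -/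
/-- Left multiplication of an element of the unitalization on the C*-algebra. -/
def lmulU {A : Type*} [NonUnitalNormedRing A] [NormedSpace ℂ A]
    (x : Unitization ℂ A) (a : A) : A := x.fst • a + x.snd * a

/-- Right multiplication of an element of the unitalization on the C*-algebra. -/
def rmulU {A : Type*} [NonUnitalNormedRing A] [NormedSpace ℂ A]
    (a : A) (x : Unitization ℂ A) : A := x.fst • a + a * x.snd

theorem lmulU_rmulU_assoc {A : Type*} [NonUnitalNormedRing A] [NormedSpace ℂ A]
    [IsScalarTower ℂ A A] [SMulCommClass ℂ A A] (x y : Unitization ℂ A) (a : A) :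
    lmulU x (rmulU a y) = rmulU (lmulU x a) y := by
  simp only [lmulU, rmulU, smul_add, mul_add, add_mul, smul_smul, smul_mul_assoc, mul_smul_comm,
    mul_assoc, mul_comm x.fst]
  abel

theorem sum_sum_eq_of_map_add {ι κ M N P : Type*} [AddCommMonoid M] [AddCommMonoid N]
    [AddCommGroup P] (B : M → N → P)
    (hl : ∀ m m' n, B (m + m') n = B m n + B m' n) (hr : ∀ m n n', B m (n + n') = B m n + B m n')
    (s : Finset ι) (t : Finset κ) (f : ι → M) (g : κ → N) :
    ∑ j ∈ s, ∑ k ∈ t, B (f j) (g k) = B (∑ j ∈ s, f j) (∑ k ∈ t, g k) := by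
  have hsuml : ∀ n, B (∑ j ∈ s, f j) n = ∑ j ∈ s, B (f j) n := fun n =>
    map_sum (AddMonoidHom.mk' (B · n) fun m m' => hl m m' n) f s
  have hsumr : ∀ m, B m (∑ k ∈ t, g k) = ∑ k ∈ t, B m (g k) := fun m =>
    map_sum (AddMonoidHom.mk' (B m) (hr m)) g t
  simp only [hsuml, hsumr]

theorem apply_act_eq_of_intertwining {G X V M S : Type*} [Group G]
    (act : G → X → X) (hact1 : ∀ x, act 1 x = x)
    (hactmul : ∀ g h x, act (g * h) x = act g (act h x))
    (U : G → V → V) (hU1 : U 1 = id) (hUmul : ∀ g h v, U (g * h) v = U g (U h v))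
    (R : X → V → M) (T : G → M → M) (actM : M → S → M) (α : G → X → S)
    (hR : ∀ x g v, R x (U g v) = actM (T g (R (act g⁻¹ x) v)) (α g (act g⁻¹ x)))
    (g : G) (x : X) (v : V) :
    R (act g x) v = actM (T g (R x (U g⁻¹ v))) (α g x) := by
  have hUv : U g (U g⁻¹ v) = v := by rw [← hUmul, mul_inv_cancel, hU1, id]
  have hx : act g⁻¹ (act g x) = x := by rw [← hactmul, inv_mul_cancel, hact1]
  simpa only [hUv, hx] using hR (act g x) g (U g⁻¹ v)

theorem dilation_gives_positive_covariant_kernel_general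
    {A G X V M : Type*}
    [NonUnitalNormedRing A] [StarRing A]
    [NormedSpace ℂ A] [IsScalarTower ℂ A A] [SMulCommClass ℂ A A]
    [Group G] [AddCommGroup M]
    -- the G-action on X
    (act : G → X → X)
    (hact1 : ∀ x : X, act 1 x = x)
    (hactmul : ∀ (g h : G) (x : X), act (g * h) x = act g (act h x))
    -- the representation U of G on V
    (U : G → V → V)
    (hU1 : U 1 = id)
    (hUmul : ∀ (g h : G) (v : V), U (g * h) v = U g (U h v))
    -- α and its associated 2-cocycle σ, valued in central (invertible resp. unitary) elements
    (α : G → X → Unitization ℂ A)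
    -- the Hilbert A-module structure of M
    (inner : M → M → A)
    (actM : M → Unitization ℂ A → M)
    (hinner_addl : ∀ m m' m'' : M, inner (m + m') m'' = inner m m'' + inner m' m'')
    (hinner_addr : ∀ m m' m'' : M, inner m (m' + m'') = inner m m' + inner m m'')
    (hinner_actr : ∀ (m m' : M) (x : Unitization ℂ A),
      inner m (actM m' x) = rmulU (inner m m') x)
    (hinner_actl : ∀ (m m' : M) (x : Unitization ℂ A),
      inner (actM m x) m' = lmulU (star x) (inner m m'))
    (hpos : ∀ m : M, ∃ b : A, inner m m = star b * b)
    -- R and the σ-multiplier representation Ut on M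
    (R : X → V → M)
    (Ut : G → M → M)
    (hUtinner : ∀ (g : G) (m m' : M), inner (Ut g m) (Ut g m') = inner m m')
    -- the intertwining relation (iii)
    (hR : ∀ (x : X) (g : G) (v : V),
      R x (U g v) = actM (Ut g (R (act g⁻¹ x) v)) (α g (act g⁻¹ x))) :
    -- (a) positivity of the kernel K x y v w := inner (R x v) (R y w)
    (∀ (n : ℕ) (xs : Fin n → X) (vs : Fin n → V), ∃ b : A,
      (∑ j : Fin n, ∑ k : Fin n, inner (R (xs j) (vs j)) (R (xs k) (vs k))) = star b * b) ∧
    -- (b) covariance of the kernel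
    (∀ (g : G) (x y : X) (v w : V),
      inner (R (act g x) v) (R (act g y) w) =
        rmulU (lmulU (star (α g x)) (inner (R x (U g⁻¹ v)) (R y (U g⁻¹ w)))) (α g y)) := by
  constructor
  · intro n xs vs
    rw [sum_sum_eq_of_map_add inner hinner_addl hinner_addr]
    exact hpos _
  · intro g x y v w
    have hRg := apply_act_eq_of_intertwining act hact1 hactmul U hU1 hUmul R Ut actM α hR g
    rw [hRg x v, hRg y w, hinner_actl, hinner_actr, hUtinner, lmulU_rmulU_assoc]

/-- Given a Hilbert `A`-module `M`, a family `R x : V → M` of `A`-linear maps and a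
σ-multiplier representation `Ut` of `G` on `M` satisfying the intertwining relation
`R x ∘ U g = α(g, g⁻¹x) • (Ut g ∘ R (g⁻¹ x))`, the kernel
`K x y v w := ⟨R x v, R y w⟩` is a positive `(X, α, U)`-covariant kernel. -/
theorem dilation_gives_positive_covariant_kernel
    {A G X V M : Type*}
    [NonUnitalNormedRing A] [StarRing A] [CStarRing A]
    [NormedSpace ℂ A] [IsScalarTower ℂ A A] [SMulCommClass ℂ A A] [StarModule ℂ A]
    [Group G] [AddCommGroup V] [Module ℂ V] [AddCommGroup M]
    -- the G-action on X
    (act : G → X → X)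
    (hact1 : ∀ x : X, act 1 x = x)
    (hactmul : ∀ (g h : G) (x : X), act (g * h) x = act g (act h x))
    -- the representation U of G on V
    (U : G → V → V)
    (hU1 : U 1 = id)
    (hUmul : ∀ (g h : G) (v : V), U (g * h) v = U g (U h v))
    -- α and its associated 2-cocycle σ, valued in central (invertible resp. unitary) elements
    (α : G → X → Unitization ℂ A) (σ : G → G → Unitization ℂ A)
    (hα1 : ∀ x : X, α 1 x = 1)
    (hαc : ∀ (g : G) (x : X) (y : Unitization ℂ A), α g x * y = y * α g x)
    (hαinv : ∀ (g : G) (x : X), IsUnit (α g x))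
    (hαcoc : ∀ (g h : G) (x : X), α (g * h) x = σ g h * α h x * α g (act h x))
    (hσu : ∀ g h : G, star (σ g h) * σ g h = 1 ∧ σ g h * star (σ g h) = 1)
    (hσc : ∀ (g h : G) (y : Unitization ℂ A), σ g h * y = y * σ g h)
    -- the Hilbert A-module structure of M
    (inner : M → M → A)
    (actM : M → Unitization ℂ A → M)
    (hactM1 : ∀ m : M, actM m 1 = m)
    (hactMmul : ∀ (m : M) (x y : Unitization ℂ A), actM (actM m x) y = actM m (x * y))
    (hinner_addl : ∀ m m' m'' : M, inner (m + m') m'' = inner m m'' + inner m' m'')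
    (hinner_addr : ∀ m m' m'' : M, inner m (m' + m'') = inner m m' + inner m m'')
    (hinner_star : ∀ m m' : M, star (inner m m') = inner m' m)
    (hinner_actr : ∀ (m m' : M) (x : Unitization ℂ A),
      inner m (actM m' x) = rmulU (inner m m') x)
    (hinner_actl : ∀ (m m' : M) (x : Unitization ℂ A),
      inner (actM m x) m' = lmulU (star x) (inner m m'))
    (hpos : ∀ m : M, ∃ b : A, inner m m = star b * b)
    -- R and the σ-multiplier representation Ut on M
    (R : X → V → M)
    (Ut : G → M → M)
    (hUt1 : Ut 1 = id)
    (hUtmul : ∀ (g h : G) (m : M), Ut g (Ut h m) = actM (Ut (g * h) m) (σ g h))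
    (hUtinner : ∀ (g : G) (m m' : M), inner (Ut g m) (Ut g m') = inner m m')
    (hUtsurj : ∀ g : G, Function.Surjective (Ut g))
    -- the intertwining relation (iii)
    (hR : ∀ (x : X) (g : G) (v : V),
      R x (U g v) = actM (Ut g (R (act g⁻¹ x) v)) (α g (act g⁻¹ x))) :
    -- (a) positivity of the kernel K x y v w := inner (R x v) (R y w)
    (∀ (n : ℕ) (xs : Fin n → X) (vs : Fin n → V), ∃ b : A,
      (∑ j : Fin n, ∑ k : Fin n, inner (R (xs j) (vs j)) (R (xs k) (vs k))) = star b * b) ∧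
    -- (b) covariance of the kernel
    (∀ (g : G) (x y : X) (v w : V),
      inner (R (act g x) v) (R (act g y) w) =
        rmulU (lmulU (star (α g x)) (inner (R x (U g⁻¹ v)) (R y (U g⁻¹ w)))) (α g y)) :=
  dilation_gives_positive_covariant_kernel_general act hact1 hactmul U hU1 hUmul α inner actM
    hinner_addl hinner_addr hinner_actr hinner_actl hpos R Ut hUtinner hR
end

section
/- Let (M, π, J, Ũ) be a minimal (β, U)-covariant dilation of S ∈ CP_β^U, and suppose the action β is inner: β_g(b) = u_g b u_g* with unitaries u_g ∈ B, u_e = 1, and u_{gh} = m(g,h) u_g u_h for a central-unitary-valued 2-cocycle m. Define Ū(g) := π(u_g*) Ũ(g) and M(g,h) := π(m(g,h)). Then: (i) Ū(g) commutes with π(b) for all g ∈ G and b ∈ B; (ii) Ū(g) Ū(h) = M(g,h) Ū(gh) for all g, h ∈ G, i.e. Ū is an M-multiplier representation; (iii) Ū(g) J = π(u_g*) J U(g). -/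
/-!
Covariance says `Ũ g ∘ π b = π (u g * b * (u g)*) ∘ Ũ g`, so precomposing `π (u g)*` cancels the
twist on the left: `π (u g)* ∘ Ũ g ∘ π c = π (c * (u g)*) ∘ Ũ g`. With `c = b` this is (i); with
`c = (u h)*` it turns `Ū g ∘ Ū h` into `π ((u g * u h)*) ∘ Ũ (g h)`, and `u (g h) = m g h * u g * u h`
with `m g h` central and unitary gives (ii). Part (iii) is `J ∘ U g = Ũ g ∘ J`.
-/

theorem conj_covariant_apply {B M : Type*} [Monoid B] {π : B → M → M}
    (hπmul : ∀ (b c : B) (x : M), π (b * c) x = π b (π c x)) {T : M → M} {w w' : B}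
    (hw : w' * w = 1) (hT : ∀ (b : B) (x : M), T (π b x) = π (w * b * w') (T x))
    (c : B) (x : M) : π w' (T (π c x)) = π (c * w') (T x) := by
  rw [hT, ← hπmul, ← mul_assoc, ← mul_assoc, hw, one_mul]

theorem mul_star_mul_of_commute_of_star_mul_self {B : Type*} [Monoid B] [StarMul B] {z : B}
    (hz : ∀ b : B, z * b = b * z) (hzu : star z * z = 1) (a : B) :
    z * star (z * a) = star a := by
  rw [star_mul, hz, mul_assoc, hzu, mul_one]

theorem inner_action_dilation_commuting_representation_general
    {B G V M : Type*}
    [NormedRing B] [StarRing B]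
    [Group G]
    (u : G → B) (m : G → G → B)
    (hu : ∀ g : G, star (u g) * u g = 1 ∧ u g * star (u g) = 1)
    (hm : ∀ g h : G, u (g * h) = m g h * (u g * u h))
    (hmc : ∀ (g h : G) (b : B), m g h * b = b * m g h)
    (hmu : ∀ g h : G, star (m g h) * m g h = 1 ∧ m g h * star (m g h) = 1)
    -- the unital *-homomorphism π (as a multiplicative unital map of operators)
    (π : B → M → M)
    (hπmul : ∀ (b c : B) (x : M), π (b * c) x = π b (π c x))
    -- the representations U, Ut and the map J of the minimal covariant dilation
    (U : G → V → V)
    (Ut : G → M → M)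
    (hUtmul : ∀ (g h : G) (x : M), Ut g (Ut h x) = Ut (g * h) x)
    (J : V → M)
    (hJU : ∀ (g : G) (v : V), J (U g v) = Ut g (J v))
    (hUtπ : ∀ (g : G) (b : B) (x : M),
      Ut g (π b x) = π (u g * b * star (u g)) (Ut g x)) :
    -- (i) Ū g commutes with every π b
    (∀ (g : G) (b : B) (x : M),
      π (star (u g)) (Ut g (π b x)) = π b (π (star (u g)) (Ut g x))) ∧
    -- (ii) Ū g ∘ Ū h = M(g,h) ∘ Ū(gh)
    (∀ (g h : G) (x : M),
      π (star (u g)) (Ut g (π (star (u h)) (Ut h x))) =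
        π (m g h) (π (star (u (g * h))) (Ut (g * h) x))) ∧
    -- (iii) Ū g ∘ J = π (u g)* ∘ J ∘ U g
    (∀ (g : G) (v : V),
      π (star (u g)) (Ut g (J v)) = π (star (u g)) (J (U g v))) := by
  refine ⟨fun g b x => ?_, fun g h x => ?_, fun g v => by rw [hJU]⟩
  · rw [conj_covariant_apply hπmul (hu g).1 (hUtπ g), hπmul]
  · rw [conj_covariant_apply hπmul (hu g).1 (hUtπ g), hUtmul, ← hπmul, hm,
      mul_star_mul_of_commute_of_star_mul_self (hmc g h) (hmu g h).1, star_mul]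

/-- For a minimal covariant dilation of a CP map covariant under an inner action
`β g b = u g * b * (u g)*`, the operators `Ū g := π (u g)* ∘ Ut g` commute with the range of
`π`, form an `M`-multiplier representation with `M g h = π (m g h)`, and satisfy
`Ū g ∘ J = π (u g)* ∘ J ∘ U g`. -/
theorem inner_action_dilation_commuting_representation
    {B G V M : Type*}
    [NormedRing B] [StarRing B] [CStarRing B] [NormedAlgebra ℂ B] [StarModule ℂ B]
    [Group G]
    (u : G → B) (m : G → G → B)
    (hu : ∀ g : G, star (u g) * u g = 1 ∧ u g * star (u g) = 1)
    (hue : u 1 = 1)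
    (hm : ∀ g h : G, u (g * h) = m g h * (u g * u h))
    (hmc : ∀ (g h : G) (b : B), m g h * b = b * m g h)
    (hmu : ∀ g h : G, star (m g h) * m g h = 1 ∧ m g h * star (m g h) = 1)
    -- the unital *-homomorphism π (as a multiplicative unital map of operators)
    (π : B → M → M)
    (hπ1 : π 1 = id)
    (hπmul : ∀ (b c : B) (x : M), π (b * c) x = π b (π c x))
    -- the representations U, Ut and the map J of the minimal covariant dilation
    (U : G → V → V)
    (Ut : G → M → M)
    (hUt1 : Ut 1 = id)
    (hUtmul : ∀ (g h : G) (x : M), Ut g (Ut h x) = Ut (g * h) x)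
    (J : V → M)
    (hJU : ∀ (g : G) (v : V), J (U g v) = Ut g (J v))
    (hUtπ : ∀ (g : G) (b : B) (x : M),
      Ut g (π b x) = π (u g * b * star (u g)) (Ut g x)) :
    -- (i) Ū g commutes with every π b
    (∀ (g : G) (b : B) (x : M),
      π (star (u g)) (Ut g (π b x)) = π b (π (star (u g)) (Ut g x))) ∧
    -- (ii) Ū g ∘ Ū h = M(g,h) ∘ Ū(gh)
    (∀ (g h : G) (x : M),
      π (star (u g)) (Ut g (π (star (u h)) (Ut h x))) =
        π (m g h) (π (star (u (g * h))) (Ut (g * h) x))) ∧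
    -- (iii) Ū g ∘ J = π (u g)* ∘ J ∘ U g
    (∀ (g : G) (v : V),
      π (star (u g)) (Ut g (J v)) = π (star (u g)) (J (U g v))) :=
  inner_action_dilation_commuting_representation_general u m hu hm hmc hmu π hπmul U Ut hUtmul J hJU
    hUtπ
end
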